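/- For m ≥ 2, the element x(T) ∈ (S^{m-1})^{pairs of vertices of T} assigning e_1 to each pair (i,j) with i below j in the planar rooted tree T, and e_2 to each pair (i,j) with i to the left of j, lies in the Kontsevich space K_m(|T|): it is a limit of direction-vector data of genuine configurations in ℝ^m. -/

import Mathlib

open CategoryTheory

/-- A planar rooted tree: either a bare edge `η`, or a vertex with an ordered
list of planar subtrees above it.  These are the objects of the planar dendroidal
category `Ω_p`. -/
inductive PT : Type where
  | edge : PT
  | vert : List PT → PT

/-- The edges of a planar tree: the root edge, or an edge of one of the subtrees. -/
inductive Edge : PT → Type where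
  | root : (t : PT) → Edge t
  | sub : {cs : List PT} → (i : Fin cs.length) → Edge (cs.get i) → Edge (.vert cs)

/-- The subtree of `t` lying above the edge `e`. -/
def subAt : {t : PT} → Edge t → PT
  | _, .root t => t
  | _, .sub i e => subAt e

/-- Edges of the subtree above `e` are edges of the ambient tree. -/
def embed : {t : PT} → (e : Edge t) → Edge (subAt e) → Edge t
  | _, .root _, e' => e'
  | _, .sub i e, e' => .sub i (embed e e')


/-- The position of an edge in the tree: the list of child indices from the root. -/
def Edge.pos : {t : PT} → Edge t → List ℕ
  | _, .root _ => []
  | _, .sub i e => i.1 :: e.pos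

/-- The vertices of a planar tree `T`: the edges whose subtree is a genuine vertex. -/
def Vtx (t : PT) : Type :=
  {e : Edge t // ∃ cs, subAt e = PT.vert cs}

/-- `v` is (strictly) below `w`: `v` lies on the path from `w` to the root. -/
def Below {t : PT} (v w : Vtx t) : Prop :=
  v.1.pos <+: w.1.pos ∧ v.1.pos ≠ w.1.pos

/-- `v` is to the left of `w` in the planar order (for vertices neither of which is below
the other). -/
def LeftOfV {t : PT} (v w : Vtx t) : Prop :=
  ¬ v.1.pos <+: w.1.pos ∧ ¬ w.1.pos <+: v.1.pos ∧ List.Lex (· < ·) v.1.pos w.1.pos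

noncomputable section

open scoped RealInnerProductSpace

variable (m : ℕ)

/-- The first standard basis vector of `ℝ^m`, as a point of `S^{m-1}` (for `m ≥ 2`). -/
def e₁ (hm : 2 ≤ m) : Metric.sphere (0 : EuclideanSpace ℝ (Fin m)) 1 :=
  ⟨EuclideanSpace.single ⟨0, by omega⟩ (1 : ℝ), by
    simp [mem_sphere_zero_iff_norm, EuclideanSpace.norm_single]⟩

/-- The second standard basis vector of `ℝ^m`, as a point of `S^{m-1}` (for `m ≥ 2`). -/
def e₂ (hm : 2 ≤ m) : Metric.sphere (0 : EuclideanSpace ℝ (Fin m)) 1 :=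
  ⟨EuclideanSpace.single ⟨1, by omega⟩ (1 : ℝ), by
    simp [mem_sphere_zero_iff_norm, EuclideanSpace.norm_single]⟩

/-- The antipode on the sphere. -/
def sphNeg (p : Metric.sphere (0 : EuclideanSpace ℝ (Fin m)) 1) :
    Metric.sphere (0 : EuclideanSpace ℝ (Fin m)) 1 :=
  ⟨-p.1, by
    have := p.2
    simp only [mem_sphere_zero_iff_norm] at this ⊢
    simpa using this⟩

variable {m}

/-- The normalized-difference map on configurations of points of `ℝ^m` indexed by the
vertices of `T`: an injective `x : |T| → ℝ^m` is sent to the tuple of unit vectors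
`(x w − x v)/‖x w − x v‖` over ordered pairs of distinct vertices. -/
def dirMap (t : PT) (x : {x : Vtx t → EuclideanSpace ℝ (Fin m) // Function.Injective x}) :
    {p : Vtx t × Vtx t // p.1 ≠ p.2} → Metric.sphere (0 : EuclideanSpace ℝ (Fin m)) 1 :=
  fun p =>
    ⟨‖x.1 p.1.2 - x.1 p.1.1‖⁻¹ • (x.1 p.1.2 - x.1 p.1.1), by
      have hne : x.1 p.1.2 - x.1 p.1.1 ≠ 0 :=
        sub_ne_zero.2 fun h => p.2 (x.2 h).symm
      have hnorm : ‖x.1 p.1.2 - x.1 p.1.1‖ ≠ 0 := norm_ne_zero_iff.2 hne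
      simp [mem_sphere_zero_iff_norm, norm_smul, abs_of_nonneg, inv_mul_cancel₀ hnorm]⟩

open Classical in
/-- The element `x(T)` of `(S^{m-1})^{pairs}` which assigns `e₁` to each pair `(v, w)` with
`v` below `w` in the planar rooted tree `T`, and `e₂` to each pair `(v, w)` with `v` to the
left of `w` (and the antipodal values on the transposed pairs). -/
def xT (hm : 2 ≤ m) (t : PT) :
    {p : Vtx t × Vtx t // p.1 ≠ p.2} → Metric.sphere (0 : EuclideanSpace ℝ (Fin m)) 1 :=
  fun p =>
    if Below p.1.1 p.1.2 then e₁ m hm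
    else if Below p.1.2 p.1.1 then sphNeg m (e₁ m hm)
    else if LeftOfV p.1.1 p.1.2 then e₂ m hm
    else sphNeg m (e₂ m hm)

/-! The configurations are self-similar: the root sits at the origin, its `i`-th child at
`u + ε i w`, and the subtree above that child is a copy of the whole configuration shrunk by `ε²`
(`addressPoint_append`). So the direction between two vertices is unchanged by deleting the
common initial part of their addresses. What is left is either a vertex above the root, seen
from the root in direction `u + O(ε)`, or two vertices above siblings `x < y`, whose difference
is `ε ((y - x) w + O(ε))`. As `ε → 0` these directions tend to `u = e₁` and `w = e₂`. Since the
limits are nonzero and there are finitely many pairs, the configurations are injective for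
small `ε`. -/

namespace Edge

theorem pos_injective : ∀ {t : PT}, Function.Injective (Edge.pos (t := t))
  | _, .root _, .root _, _ => rfl
  | _, .sub i e, .sub j e', h => by
    obtain ⟨hij, h⟩ := List.cons_eq_cons.1 h
    obtain rfl : i = j := Fin.ext hij
    rw [pos_injective h]

instance finite : ∀ t : PT, Finite (Edge t)
  | .edge => Finite.of_injective (fun _ : Edge .edge => ()) fun
      | .root _, .root _, _ => rfl
  | .vert cs =>
    have := fun i : Fin cs.length => finite (cs.get i)
    Finite.of_injective
      (fun e : Edge (.vert cs) => match e with
        | .root _ => (none : Option (Σ i : Fin cs.length, Edge (cs.get i)))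
        | .sub i e => some ⟨i, e⟩)
      fun
        | .root _, .root _, _ => rfl
        | .sub _ _, .sub _ _, h => by cases h; rfl
decreasing_by
  have := List.sizeOf_get cs i
  simp only [PT.vert.sizeOf_spec]
  omega

end Edge

instance Vtx.finite (t : PT) : Finite (Vtx t) := Subtype.finite

theorem Vtx.pos_ne_pos {t : PT} {v w : Vtx t} (h : v ≠ w) : v.1.pos ≠ w.1.pos :=
  fun hpos => h (Subtype.ext (Edge.pos_injective hpos))

open Filter Topology NormedSpace

section Normalize

variable {E : Type*} [NormedAddCommGroup E] [NormedSpace ℝ E]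

theorem NormedSpace.continuousAt_normalize {x : E} (hx : x ≠ 0) : ContinuousAt normalize x :=
  (continuousAt_id.norm.inv₀ (norm_ne_zero_iff.2 hx)).smul continuousAt_id

theorem NormedSpace.normalize_coe_sphere (x : Metric.sphere (0 : E) 1) :
    normalize (x : E) = x :=
  normalize_eq_self_of_norm_eq_one (norm_eq_of_mem_sphere x)

theorem Filter.Tendsto.normalize_of_eventually_eq_smul {α : Type*} {l : Filter α}
    {f g : α → E} {r : α → ℝ} {x : E} (hfg : ∀ᶠ a in l, 0 < r a ∧ f a = r a • g a)
    (hg : Tendsto g l (𝓝 x)) (hx : x ≠ 0) :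
    Tendsto (fun a => normalize (f a)) l (𝓝 (normalize x)) :=
  ((continuousAt_normalize hx).tendsto.comp hg).congr' <| hfg.mono fun _ ⟨hr, h⟩ => by
    simp [h, normalize_smul_of_pos hr]

end Normalize

section AddressPoint

variable {E : Type*} [NormedAddCommGroup E] [NormedSpace ℝ E] (u w : E)

def addressPoint (ε : ℝ) : List ℕ → E
  | [] => 0
  | i :: l => u + (ε * i) • w + ε ^ 2 • addressPoint ε l

theorem addressPoint_append (ε : ℝ) (p q : List ℕ) :
    addressPoint u w ε (p ++ q) =
      addressPoint u w ε p + (ε ^ 2) ^ p.length • addressPoint u w ε q := by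
  induction p with
  | nil => simp [addressPoint]
  | cons i p ih => simp only [List.cons_append, addressPoint, ih, List.length_cons]; module

theorem addressPoint_cons_sub_cons (ε : ℝ) (i : ℕ) (a b : List ℕ) :
    addressPoint u w ε (i :: b) - addressPoint u w ε (i :: a) =
      ε ^ 2 • (addressPoint u w ε b - addressPoint u w ε a) := by
  simp only [addressPoint]; module

@[fun_prop]
theorem continuous_addressPoint (l : List ℕ) : Continuous fun ε => addressPoint u w ε l := by
  induction l with
  | nil => exact continuous_const
  | cons i l ih => simp only [addressPoint]; fun_prop

variable {u w}

theorem tendsto_normalize_addressPoint_of_prefix (hu : u ≠ 0) {a b : List ℕ} (hab : a <+: b)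
    (hne : a ≠ b) :
    Tendsto (fun ε => normalize (addressPoint u w ε b - addressPoint u w ε a)) (𝓝[>] 0)
      (𝓝 (normalize u)) := by
  obtain ⟨_ | ⟨y, c⟩, rfl⟩ := hab
  · simp at hne
  have hlim : Tendsto (fun ε => addressPoint u w ε (y :: c)) (𝓝[>] 0) (𝓝 u) :=
    ((continuous_addressPoint u w _).tendsto' 0 u (by simp [addressPoint])).mono_left
      nhdsWithin_le_nhds
  refine hlim.normalize_of_eventually_eq_smul (r := fun ε => (ε ^ 2) ^ a.length) ?_ hu
  filter_upwards [self_mem_nhdsWithin] with ε (hε : 0 < ε)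
  exact ⟨by positivity, by rw [addressPoint_append, add_sub_cancel_left]⟩

theorem tendsto_normalize_addressPoint_of_lex (hw : w ≠ 0) {a b : List ℕ}
    (hab : List.Lex (· < ·) a b) (hpre : ¬ a <+: b) :
    Tendsto (fun ε => normalize (addressPoint u w ε b - addressPoint u w ε a)) (𝓝[>] 0)
      (𝓝 (normalize w)) := by
  induction hab with
  | nil => exact absurd List.nil_prefix hpre
  | @cons i a b _ ih =>
    refine (ih fun h => hpre (List.cons_prefix_cons.2 ⟨rfl, h⟩)).congr' ?_
    filter_upwards [self_mem_nhdsWithin] with ε (hε : 0 < ε)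
    rw [addressPoint_cons_sub_cons, normalize_smul_of_pos (by positivity)]
  | @rel x a y b hxy =>
    have hyx : (0 : ℝ) < y - x := sub_pos.2 (Nat.cast_lt.2 hxy)
    have hlim : Tendsto (fun ε => ((y : ℝ) - x) • w +
        ε • (addressPoint u w ε b - addressPoint u w ε a)) (𝓝[>] 0) (𝓝 (((y : ℝ) - x) • w)) :=
      (Continuous.tendsto' (by fun_prop) 0 _ (by simp)).mono_left nhdsWithin_le_nhds
    rw [← normalize_smul_of_pos hyx]
    refine hlim.normalize_of_eventually_eq_smul (r := fun ε => ε) ?_ (smul_ne_zero hyx.ne' hw)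
    filter_upwards [self_mem_nhdsWithin] with ε (hε : 0 < ε)
    refine ⟨hε, ?_⟩
    simp only [addressPoint]; module

end AddressPoint

theorem mem_closure_range_dirMap {α : Type*} {l : Filter α} [l.NeBot] {t : PT}
    {c : α → Vtx t → EuclideanSpace ℝ (Fin m)}
    {x : {p : Vtx t × Vtx t // p.1 ≠ p.2} → Metric.sphere (0 : EuclideanSpace ℝ (Fin m)) 1}
    (hc : ∀ p, Tendsto (fun a => normalize (c a p.1.2 - c a p.1.1)) l (𝓝 (x p : _))) :
    x ∈ closure (Set.range (dirMap t)) := by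
  have hinj : ∀ᶠ a in l, Function.Injective (c a) := by
    have hne : ∀ᶠ a in l, ∀ p : {p : Vtx t × Vtx t // p.1 ≠ p.2}, c a p.1.2 ≠ c a p.1.1 :=
      eventually_all.2 fun p => ((hc p).eventually_ne (ne_zero_of_mem_unit_sphere (x p))).mono
        fun a h heq => h (by simp [heq])
    filter_upwards [hne] with a ha v w hvw
    by_contra h
    exact ha ⟨(v, w), h⟩ hvw.symm
  classical
  refine mem_closure_of_tendsto
    (f := fun a => if h : Function.Injective (c a) then dirMap t ⟨c a, h⟩ else x) ?_
    (hinj.mono fun a h => by simp only [dif_pos h, Set.mem_range_self])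
  refine tendsto_pi_nhds.2 fun p => tendsto_subtype_rng.2 <| (hc p).congr' ?_
  filter_upwards [hinj] with a h
  simp [h, dirMap, NormedSpace.normalize]

def treeConfig (hm : 2 ≤ m) (t : PT) (ε : ℝ) (v : Vtx t) : EuclideanSpace ℝ (Fin m) :=
  addressPoint (e₁ m hm : EuclideanSpace ℝ (Fin m)) (e₂ m hm) ε v.1.pos

theorem tendsto_normalize_treeConfig_sub (hm : 2 ≤ m) (t : PT)
    (p : {p : Vtx t × Vtx t // p.1 ≠ p.2}) :
    Tendsto (fun ε => normalize (treeConfig hm t ε p.1.2 - treeConfig hm t ε p.1.1)) (𝓝[>] 0)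
      (𝓝 (xT hm t p : EuclideanSpace ℝ (Fin m))) := by
  obtain ⟨⟨v, w⟩, hne⟩ := p
  have hpos := Vtx.pos_ne_pos hne
  have he₁ := ne_zero_of_mem_unit_sphere (e₁ m hm)
  have he₂ := ne_zero_of_mem_unit_sphere (e₂ m hm)
  simp only [xT, treeConfig]
  split_ifs with hvw hwv hleft
  · simpa [normalize_coe_sphere] using tendsto_normalize_addressPoint_of_prefix he₁ hvw.1 hvw.2
  · have := (tendsto_normalize_addressPoint_of_prefix (w := (e₂ m hm : EuclideanSpace ℝ (Fin m)))
      he₁ hwv.1 hwv.2).neg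
    simp only [← normalize_neg, neg_sub, normalize_coe_sphere] at this
    exact this
  · simpa [normalize_coe_sphere] using tendsto_normalize_addressPoint_of_lex he₂ hleft.2.2 hleft.1
  · have hvw' : ¬ v.1.pos <+: w.1.pos := fun h => hvw ⟨h, hpos⟩
    have hwv' : ¬ w.1.pos <+: v.1.pos := fun h => hwv ⟨h, hpos.symm⟩
    have hlex : List.Lex (· < ·) w.1.pos v.1.pos := by
      by_contra hlex
      exact hpos (Std.Trichotomous.trichotomous _ _ (fun h => hleft ⟨hvw', hwv', h⟩) hlex)
    have := (tendsto_normalize_addressPoint_of_lex (u := (e₁ m hm : EuclideanSpace ℝ (Fin m)))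
      he₂ hlex hwv').neg
    simp only [← normalize_neg, neg_sub, normalize_coe_sphere] at this
    exact this

/-- For `m ≥ 2` and any planar rooted tree `T`, the tuple `x(T)` (value `e₁` on pairs one
below the other, `e₂` on pairs one to the left of the other) lies in the Kontsevich space
`K_m(|T|)`, the closure in `(S^{m-1})^{C(n,2)}` of the set of direction-vector data of genuine
configurations in `ℝ^m`. -/
theorem xT_mem_kontsevich_space (hm : 2 ≤ m) (t : PT) :
    xT hm t ∈ closure (Set.range (dirMap t)) :=
  mem_closure_range_dirMap (tendsto_normalize_treeConfig_sub hm t)
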